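/- Let q ≥ 0 and M > 0. There exists a constant C > 0 such that for all t > 0 and all w ≤ 0: t^{−1/2} ∫₀^t (t−s)^{−1/2} (1+s)^{−1/2} e^{−(w − q(t−s))²/(Mt)} ds ≤ C (1+t)^{−1/2} e^{−w²/(Mt)}. -/

import Mathlib

/-!
Since `w ≤ 0 ≤ q (t - s)`, we have `(w - q (t - s))² ≥ w²`, so the Gaussian factor is at most
`exp (-w² / (M t))` and comes out of the integral. The remaining integral equals `2 arctan √t`
(an antiderivative is `-2 arctan √((t - s) / (1 + s))`), and `arctan x · √(1 + x²) ≤ 4 x` for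
`x = √t` turns `t^(-1/2) · 2 arctan √t` into at most `8 (1 + t)^(-1/2)`.
-/

open MeasureTheory Set Real

lemma rpow_neg_one_half_eq_inv_sqrt {x : ℝ} (hx : 0 ≤ x) : x ^ (-(1/2:ℝ)) = (√x)⁻¹ := by
  rw [rpow_neg hx, sqrt_eq_rpow]

lemma arctan_le_self {x : ℝ} (hx : 0 ≤ x) : arctan x ≤ x :=
  calc arctan x ≤ tan (arctan x) := le_tan (arctan_nonneg.2 hx) (arctan_lt_pi_div_two x)
    _ = x := tan_arctan x

lemma arctan_mul_sqrt_one_add_sq_le {x : ℝ} (hx : 0 ≤ x) : arctan x * √(1 + x ^ 2) ≤ 4 * x := by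
  rcases le_total x 1 with hx1 | hx1
  · have hsqrt : √(1 + x ^ 2) ≤ 2 := sqrt_le_iff.2 ⟨by norm_num, by nlinarith⟩
    nlinarith [mul_le_mul (arctan_le_self hx) hsqrt (sqrt_nonneg _) hx]
  · have hsqrt : √(1 + x ^ 2) ≤ 2 * x := sqrt_le_iff.2 ⟨by linarith, by nlinarith⟩
    have harctan : arctan x ≤ 2 := by linarith [arctan_lt_pi_div_two x, pi_lt_four]
    nlinarith [mul_le_mul harctan hsqrt (sqrt_nonneg _) zero_le_two]

lemma hasDerivAt_neg_two_mul_arctan_sqrt {t s : ℝ} (hs : -1 < s) (hst : s < t) :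
    HasDerivAt (fun s => -2 * arctan √((t - s) / (1 + s)))
      ((t - s) ^ (-(1/2:ℝ)) * (1 + s) ^ (-(1/2:ℝ))) s := by
  have h1 : 0 < 1 + s := by linarith
  have h2 : 0 < t - s := by linarith
  have hquot : HasDerivAt (fun s : ℝ => (t - s) / (1 + s)) (-(1 + t) / (1 + s) ^ 2) s := by
    refine (((hasDerivAt_id s).const_sub t).div ((hasDerivAt_id s).const_add 1)
      h1.ne').congr_deriv ?_
    simp only [id]
    ring
  refine (((hquot.sqrt (div_pos h2 h1).ne').arctan).const_mul (-2)).congr_deriv ?_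
  rw [rpow_neg_one_half_eq_inv_sqrt h2.le, rpow_neg_one_half_eq_inv_sqrt h1.le,
    sq_sqrt (div_pos h2 h1).le, sqrt_div h2.le]
  field_simp
  rw [sq_sqrt h1.le]
  ring

lemma continuousOn_neg_two_mul_arctan_sqrt (t : ℝ) :
    ContinuousOn (fun s => -2 * arctan √((t - s) / (1 + s))) (Icc 0 t) := by
  refine continuousOn_const.mul (continuous_arctan.comp_continuousOn
    ((ContinuousOn.div (by fun_prop) (by fun_prop) ?_).sqrt))
  intro s hs
  linarith [hs.1]

lemma integrableOn_sub_rpow_mul_one_add_rpow (t : ℝ) :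
    IntegrableOn (fun s => (t - s) ^ (-(1/2:ℝ)) * (1 + s) ^ (-(1/2:ℝ))) (Ioc 0 t) :=
  intervalIntegral.integrableOn_deriv_of_nonneg (continuousOn_neg_two_mul_arctan_sqrt t)
    (fun s hs => hasDerivAt_neg_two_mul_arctan_sqrt (by linarith [hs.1]) hs.2)
    (fun s hs => mul_nonneg (rpow_nonneg (by linarith [hs.2]) _)
      (rpow_nonneg (by linarith [hs.1]) _))

lemma integral_sub_rpow_mul_one_add_rpow {t : ℝ} (ht : 0 ≤ t) :
    ∫ s in Ioo 0 t, (t - s) ^ (-(1/2:ℝ)) * (1 + s) ^ (-(1/2:ℝ)) = 2 * arctan √t := by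
  rw [← integral_Ioc_eq_integral_Ioo, ← intervalIntegral.integral_of_le ht,
    intervalIntegral.integral_eq_sub_of_hasDerivAt_of_le ht
      (continuousOn_neg_two_mul_arctan_sqrt t)
      (fun s hs => hasDerivAt_neg_two_mul_arctan_sqrt (by linarith [hs.1]) hs.2)
      ((intervalIntegrable_iff_integrableOn_Ioc_of_le ht).2
        (integrableOn_sub_rpow_mul_one_add_rpow t))]
  simp

lemma exp_neg_sq_sub_div_le_exp_neg_sq_div {w a K : ℝ} (hw : w ≤ 0) (ha : 0 ≤ a) (hK : 0 ≤ K) :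
    exp (-(w - a) ^ 2 / K) ≤ exp (-w ^ 2 / K) := by
  refine exp_le_exp.2 (div_le_div_of_nonneg_right (neg_le_neg ?_) hK)
  nlinarith

lemma setIntegral_mul_le_integral_mul_of_le {α : Type*} [MeasurableSpace α] {μ : Measure α}
    {f g : α → ℝ} {s : Set α} {E : ℝ} (hs : MeasurableSet s) (hf : IntegrableOn f s μ)
    (hf0 : ∀ x ∈ s, 0 ≤ f x) (hg0 : ∀ x ∈ s, 0 ≤ g x) (hgE : ∀ x ∈ s, g x ≤ E) :
    ∫ x in s, f x * g x ∂μ ≤ (∫ x in s, f x ∂μ) * E := by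
  rw [← integral_mul_const]
  refine integral_mono_of_nonneg ?_ (hf.mul_const E) ?_ <;> filter_upwards [ae_restrict_mem hs]
  · exact fun x hx => mul_nonneg (hf0 x hx) (hg0 x hx)
  · exact fun x hx => mul_le_mul_of_nonneg_left (hgE x hx) (hf0 x hx)

theorem time_integral_no_cancellation (q M : ℝ) (hq : 0 ≤ q) (hM : 0 < M) :
    ∃ C > 0, ∀ t : ℝ, 0 < t → ∀ w : ℝ, w ≤ 0 →
      t ^ (-(1/2:ℝ)) *
        (∫ s in Set.Ioo (0:ℝ) t,
          (t - s) ^ (-(1/2:ℝ)) * (1 + s) ^ (-(1/2:ℝ)) *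
            Real.exp (-(w - q*(t-s))^2 / (M*t))) ≤
      C * (1 + t) ^ (-(1/2:ℝ)) * Real.exp (-w^2 / (M*t)) := by
  refine ⟨8, by norm_num, fun t ht w hw => ?_⟩
  have hI := setIntegral_mul_le_integral_mul_of_le
    (g := fun s => exp (-(w - q * (t - s)) ^ 2 / (M * t))) measurableSet_Ioo
    ((integrableOn_sub_rpow_mul_one_add_rpow t).mono_set Ioo_subset_Ioc_self)
    (fun s hs => mul_nonneg (rpow_nonneg (by linarith [hs.2]) _)
      (rpow_nonneg (by linarith [hs.1]) _))
    (fun s _ => (exp_pos _).le)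
    (fun s hs => exp_neg_sq_sub_div_le_exp_neg_sq_div hw (mul_nonneg hq (by linarith [hs.2]))
      (by positivity))
  rw [integral_sub_rpow_mul_one_add_rpow ht.le] at hI
  have harctan := arctan_mul_sqrt_one_add_sq_le (sqrt_nonneg t)
  rw [sq_sqrt ht.le] at harctan
  rw [rpow_neg_one_half_eq_inv_sqrt ht.le, rpow_neg_one_half_eq_inv_sqrt (by linarith)]
  calc (√t)⁻¹ * _ ≤ (√t)⁻¹ * (2 * arctan √t * exp (-w ^ 2 / (M * t))) := by gcongr
    _ = 2 * (arctan √t * √(1 + t)) / (√t * √(1 + t)) * exp (-w ^ 2 / (M * t)) := by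
      field_simp
    _ ≤ 2 * (4 * √t) / (√t * √(1 + t)) * exp (-w ^ 2 / (M * t)) := by gcongr
    _ = 8 * (√(1 + t))⁻¹ * exp (-w ^ 2 / (M * t)) := by
      field_simp
      ring
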